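/- Let ψ₀ := ((|0⟩+|1⟩)/√2)^{⊗3} ∈ (ℂ²)^{⊗3} and for t ∈ ℝ let ψ(t) := exp(−itH_zz)ψ₀. Then the three-tangle satisfies τ(ψ(t)) = (1/16)·|(e^{6it} − e^{−2it})² + 16 sin²(2t)| for all t; moreover τ(ψ(t)) ≤ 1 for all t and τ(ψ(π/4)) = 1. In particular, the free Ising evolution exp(−iH_zz·π/4) is a perfect distributed entangler, mapping the separable symmetric state ψ₀ to a state of maximal distributed entanglement τ = 1. -/

import Mathlib

open Matrix Complex

noncomputable section

/-- Index type for three qubits: `(ℂ²)^{⊗3} ≅ ℂ⁸` with basis `|jkl⟩`. -/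
abbrev Q3 := Fin 2 × Fin 2 × Fin 2

/-- Pauli matrix σx. -/
def sx : Matrix (Fin 2) (Fin 2) ℂ := !![0, 1; 1, 0]
/-- Pauli matrix σy. -/
def sy : Matrix (Fin 2) (Fin 2) ℂ := !![0, I; -I, 0]
/-- Pauli matrix σz. -/
def sz : Matrix (Fin 2) (Fin 2) ℂ := !![1, 0; 0, -1]

/-- Tensor (Kronecker) product of three 2×2 matrices, as an 8×8 matrix. -/
def tens3 (A B C : Matrix (Fin 2) (Fin 2) ℂ) : Matrix Q3 Q3 ℂ :=
  fun p q => A p.1 q.1 * B p.2.1 q.2.1 * C p.2.2 q.2.2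

/-- Computational basis vector `|jkl⟩`. -/
def ket (j k l : Fin 2) : Q3 → ℂ := fun p => if p = (j, k, l) then 1 else 0

/-- φ₀ = |000⟩. -/
def phi0 : Q3 → ℂ := ket 0 0 0
/-- φ₁ = |100⟩+|010⟩+|001⟩. -/
def phi1 : Q3 → ℂ := ket 1 0 0 + ket 0 1 0 + ket 0 0 1
/-- φ₂ = |110⟩+|011⟩+|101⟩. -/
def phi2 : Q3 → ℂ := ket 1 1 0 + ket 0 1 1 + ket 1 0 1
/-- φ₃ = |111⟩. -/
def phi3 : Q3 → ℂ := ket 1 1 1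

/-- The three-tangle (distributed entanglement) τ of a three-qubit pure state with
computational-basis coefficients t_{ijk} = ψ(i,j,k):
τ = 4|t₀₀₀²t₁₁₁² + t₀₀₁²t₁₁₀² + t₀₁₀²t₁₀₁² + t₁₀₀²t₀₁₁² − 2d₁ + 4d₂|. -/
def tau (ψ : Q3 → ℂ) : ℝ :=
  4 * ‖
    (ψ (0,0,0))^2 * (ψ (1,1,1))^2 + (ψ (0,0,1))^2 * (ψ (1,1,0))^2
    + (ψ (0,1,0))^2 * (ψ (1,0,1))^2 + (ψ (1,0,0))^2 * (ψ (0,1,1))^2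
    - 2 * (ψ (0,0,0) * ψ (1,1,1) * ψ (0,1,1) * ψ (1,0,0)
         + ψ (0,0,0) * ψ (1,1,1) * ψ (1,0,1) * ψ (0,1,0)
         + ψ (0,0,0) * ψ (1,1,1) * ψ (1,1,0) * ψ (0,0,1)
         + ψ (0,1,1) * ψ (1,0,0) * ψ (1,0,1) * ψ (0,1,0)
         + ψ (0,1,1) * ψ (1,0,0) * ψ (1,1,0) * ψ (0,0,1)
         + ψ (1,0,1) * ψ (0,1,0) * ψ (1,1,0) * ψ (0,0,1))
    + 4 * (ψ (0,0,0) * ψ (1,1,0) * ψ (1,0,1) * ψ (0,1,1)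
         + ψ (1,1,1) * ψ (0,0,1) * ψ (0,1,0) * ψ (1,0,0))‖

/-- H_zz = σz⊗σz⊗1 + 1⊗σz⊗σz + σz⊗1⊗σz. -/
def Hzz : Matrix Q3 Q3 ℂ := tens3 sz sz 1 + tens3 1 sz sz + tens3 sz 1 sz

/-- Tensor product of three vectors in ℂ². -/
def tensv (α β γ : Fin 2 → ℂ) : Q3 → ℂ := fun p => α p.1 * β p.2.1 * γ p.2.2

/-- The one-qubit state (|0⟩+|1⟩)/√2. -/
def uplus : Fin 2 → ℂ := fun _ => ((Real.sqrt 2 : ℂ))⁻¹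

/-- ψ₀ = ((|0⟩+|1⟩)/√2)^{⊗3}. -/
def psi0 : Q3 → ℂ := tensv uplus uplus uplus

/-- ψ(t) = e^{−itH_zz} ψ₀. -/
def psit (t : ℝ) : Q3 → ℂ :=
  (NormedSpace.exp ((-(Complex.I) * (t : ℂ)) • Hzz)).mulVec psi0

/-!
`H_zz` is diagonal, with eigenvalue `3` on `|000⟩, |111⟩` and `-1` on the other six basis states.
Hence `ψ(t)` is `e^{it}/(2√2)` times the state with amplitude `r = e^{-4it}` on `|000⟩, |111⟩` and
`1` elsewhere. For amplitudes `a` on `|000⟩, |111⟩` and `b` elsewhere the tangle polynomial factors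
as `(a - b)³ (a + 3b)`, so `τ(ψ(t)) = |(r - 1)³ (r + 3)| / 16`, and the paper's expression is
`e^{-4it} (q - 1)³ (q + 3)` with `q = r̄`. On the unit circle, `u = |r - 1|²` gives
`|r + 3|² = 16 - 3u`, and `u³ (16 - 3u) ≤ 256` with equality exactly at `u = 4`, i.e. `r = -1`,
which happens at `t = π/4`.
-/

theorem Matrix.exp_smul_diagonal_mulVec {n : Type*} [Fintype n] [DecidableEq n]
    (c : ℂ) (d v : n → ℂ) (p : n) :
    (NormedSpace.exp (c • diagonal d) *ᵥ v) p = Complex.exp (c * d p) * v p := by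
  rw [← diagonal_smul, Matrix.exp_diagonal, mulVec_diagonal, Pi.coe_exp, Pi.smul_apply,
    smul_eq_mul, Complex.exp_eq_exp_ℂ]

def symState (a b : ℂ) : Q3 → ℂ := fun p => if p = (0, 0, 0) ∨ p = (1, 1, 1) then a else b

theorem tau_smul (c : ℂ) (ψ : Q3 → ℂ) : tau (c • ψ) = ‖c‖ ^ 4 * tau ψ := by
  simp only [tau, Pi.smul_apply, smul_eq_mul]
  rw [← norm_pow, mul_left_comm ‖c ^ 4‖, ← norm_mul]
  congr 2
  ring

theorem tau_symState (a b : ℂ) : tau (symState a b) = 4 * ‖(a - b) ^ 3 * (a + 3 * b)‖ := by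
  rw [tau]
  congr 2
  simp [symState]
  ring

theorem Hzz_eq_diagonal : Hzz = diagonal (symState 3 (-1)) := by
  ext ⟨j, k, l⟩ ⟨j', k', l'⟩
  fin_cases j <;> fin_cases k <;> fin_cases l <;> fin_cases j' <;> fin_cases k' <;> fin_cases l' <;>
    simp [Hzz, tens3, sz, symState, diagonal] <;> norm_num

theorem psit_eq_smul_symState (t : ℝ) :
    psit t = ((Real.sqrt 2 : ℂ)⁻¹ ^ 3 * Complex.exp (t * I)) •
      symState (Complex.exp (-4 * t * I)) 1 := by
  funext p
  rw [psit, Hzz_eq_diagonal, exp_smul_diagonal_mulVec]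
  simp only [psi0, tensv, uplus, symState, Pi.smul_apply, smul_eq_mul]
  split_ifs
  · rw [show -I * t * 3 = -4 * t * I + t * I by ring, Complex.exp_add]
    ring
  · rw [show -I * t * -1 = t * I by ring]
    ring

def tanglePoly (q : ℂ) : ℂ := (q - 1) ^ 3 * (q + 3)

theorem tau_psit (t : ℝ) : tau (psit t) = ‖tanglePoly (Complex.exp (-4 * t * I))‖ / 16 := by
  have hs : ‖(Real.sqrt 2 : ℂ)⁻¹‖ ^ 12 = 1 / 64 := by
    rw [norm_inv, Complex.norm_real, Real.norm_of_nonneg (Real.sqrt_nonneg 2), inv_pow,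
      show (12 : ℕ) = 2 * 6 from rfl, pow_mul, Real.sq_sqrt zero_le_two]
    norm_num
  rw [psit_eq_smul_symState, tau_smul, tau_symState, tanglePoly, norm_mul, norm_pow,
    Complex.norm_exp_ofReal_mul_I]
  simp only [mul_one, ← pow_mul, hs]
  ring

theorem norm_tanglePoly_conj (q : ℂ) : ‖tanglePoly (starRingEnd ℂ q)‖ = ‖tanglePoly q‖ := by
  have : tanglePoly (starRingEnd ℂ q) = starRingEnd ℂ (tanglePoly q) := by
    simp [tanglePoly, map_ofNat]
  rw [this, Complex.norm_conj]

theorem norm_tanglePoly_le {q : ℂ} (hq : ‖q‖ = 1) : ‖tanglePoly q‖ ≤ 16 := by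
  have hunit : q.re ^ 2 + q.im ^ 2 = 1 := by
    have := Complex.sq_norm q
    rw [hq, Complex.normSq_apply] at this
    linarith
  have hsub : Complex.normSq (q - 1) = 2 - 2 * q.re := by
    simp only [Complex.normSq_apply, Complex.sub_re, Complex.sub_im, Complex.one_re, Complex.one_im]
    linear_combination hunit
  have hadd : Complex.normSq (q + 3) = 10 + 6 * q.re := by
    simp only [Complex.normSq_apply, Complex.add_re, Complex.add_im, Complex.re_ofNat,
      Complex.im_ofNat]
    linear_combination hunit
  have hsq : ‖tanglePoly q‖ ^ 2 = (2 - 2 * q.re) ^ 3 * (10 + 6 * q.re) := by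
    rw [Complex.sq_norm, tanglePoly, map_mul, map_pow, hsub, hadd]
  -- with `u = 2 - 2 re q`: `256 - u³ (16 - 3u) = (u - 4)² (3u² + 8u + 16)`
  have hle : ‖tanglePoly q‖ ^ 2 ≤ 16 ^ 2 := by
    rw [hsq]
    nlinarith [sq_nonneg (2 + 2 * q.re), sq_nonneg (3 * (2 - 2 * q.re) + 4)]
  exact (pow_le_pow_iff_left₀ (norm_nonneg _) (by norm_num) two_ne_zero).1 hle

theorem exp_sub_exp_sq_add_sin_sq_eq_tanglePoly (t : ℝ) :
    (Complex.exp (6 * I * t) - Complex.exp (-2 * I * t)) ^ 2 + 16 * (Real.sin (2 * t) : ℂ) ^ 2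
      = Complex.exp (-4 * t * I) * tanglePoly (Complex.exp (4 * t * I)) := by
  set w := Complex.exp (2 * t * I) with hw
  have hw0 : w ≠ 0 := Complex.exp_ne_zero _
  have h6 : Complex.exp (6 * I * t) = w ^ 3 := by rw [← Complex.exp_nat_mul]; ring_nf
  have h2 : Complex.exp (-2 * I * t) = w⁻¹ := by rw [← Complex.exp_neg]; ring_nf
  have h4 : Complex.exp (4 * t * I) = w ^ 2 := by rw [← Complex.exp_nat_mul]; ring_nf
  have h4' : Complex.exp (-4 * t * I) = w⁻¹ ^ 2 := by
    rw [← Complex.exp_neg, ← Complex.exp_nat_mul]; ring_nf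
  have hsin : (Real.sin (2 * t) : ℂ) = (w⁻¹ - w) * I / 2 := by
    rw [Complex.ofReal_sin, Complex.sin, ← h2, hw]
    push_cast
    ring_nf
  rw [h6, h2, h4, h4', hsin, tanglePoly]
  field_simp
  linear_combination 16 * (w ^ 2 - 1) ^ 2 * Complex.I_sq

/-- the free Ising evolution of ψ₀ has three-tangle
τ(ψ(t)) = (1/16)|(e^{6it} − e^{−2it})² + 16 sin²(2t)|, bounded by 1, with value 1 at
t = π/4: e^{−iH_zz π/4} is a perfect distributed entangler. -/
theorem statement18 :
    (∀ t : ℝ, tau (psit t) =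
      (1/16) * ‖(Complex.exp (6 * Complex.I * (t : ℂ))
          - Complex.exp (-2 * Complex.I * (t : ℂ))) ^ 2
        + 16 * ((Real.sin (2 * t) : ℂ)) ^ 2‖) ∧
    (∀ t : ℝ, tau (psit t) ≤ 1) ∧
    tau (psit (Real.pi / 4)) = 1 := by
  have hunit (t : ℝ) : ‖Complex.exp (-4 * t * I)‖ = 1 := by simp [Complex.norm_exp]
  refine ⟨fun t => ?_, fun t => ?_, ?_⟩
  · have hconj : starRingEnd ℂ (Complex.exp (4 * t * I)) = Complex.exp (-4 * t * I) := by
      rw [← Complex.exp_conj]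
      simp [map_ofNat, neg_mul]
    rw [tau_psit, exp_sub_exp_sq_add_sin_sq_eq_tanglePoly, norm_mul, hunit, ← hconj,
      norm_tanglePoly_conj]
    ring
  · have := norm_tanglePoly_le (hunit t)
    rw [tau_psit]
    linarith
  · have hexp : Complex.exp (-4 * (Real.pi / 4 : ℝ) * I) = -1 := by
      rw [show -4 * ((Real.pi / 4 : ℝ) : ℂ) * I = -(Real.pi * I) by push_cast; ring,
        Complex.exp_neg, Complex.exp_pi_mul_I]
      norm_num
    rw [tau_psit, hexp, tanglePoly]
    norm_num
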